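/- The two nilpotent 3-dimensional complex algebras B₁ (single nonzero basis product e₁e₁ = e₂) and B₂ (nonzero basis products e₁e₁ = e₂, e₃e₃ = e₂) are not isomorphic as algebras. -/
import Mathlib


/-- B₁: single nonzero basis product `e₁e₁ = e₂` (codifferential d₂₇). -/
def mulB1 (x y : Fin 3 → ℂ) : Fin 3 → ℂ :=
  ![0, x 0 * y 0, 0]

/-- B₂: nonzero basis products `e₁e₁ = e₂`, `e₃e₃ = e₂` (codifferential d₂₆). -/
def mulB2 (x y : Fin 3 → ℂ) : Fin 3 → ℂ :=
  ![0, x 0 * y 0 + x 2 * y 2, 0]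

/-- The nilpotent algebras B₁ and B₂ are not isomorphic. -/
theorem stmt10 :
    ¬ ∃ f : (Fin 3 → ℂ) ≃ₗ[ℂ] (Fin 3 → ℂ),
        ∀ x y : Fin 3 → ℂ, f (mulB1 x y) = mulB2 (f x) (f y) := by
  rintro ⟨f, hf⟩
  -- any x with x 0 = 0 is in the annihilator of B₁, so f x is in that of B₂
  have key : ∀ x : Fin 3 → ℂ, x 0 = 0 → (f x) 0 = 0 ∧ (f x) 2 = 0 := by
    intro x hx
    have hz : ∀ z : Fin 3 → ℂ, (f x) 0 * z 0 + (f x) 2 * z 2 = 0 := by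
      intro z
      have h0 := hf x (f.symm z)
      rw [f.apply_symm_apply] at h0
      have hnull : mulB1 x (f.symm z) = 0 := by
        funext i; fin_cases i <;> simp [mulB1, hx]
      rw [hnull, map_zero] at h0
      have := congrFun h0.symm 1
      simpa [mulB2] using this
    constructor
    · have := hz ![1, 0, 0]; simpa using this
    · have := hz ![0, 0, 1]; simpa using this
  set a : Fin 3 → ℂ := ![0, 1, 0] with ha
  set b : Fin 3 → ℂ := ![0, 0, 1] with hb
  obtain ⟨ha0, ha2⟩ := key a (by simp [ha])
  obtain ⟨hb0, hb2⟩ := key b (by simp [hb])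
  have hbne : f b ≠ 0 := by
    intro h
    have : b = 0 := f.injective (by simpa using h)
    have := congrFun this 2
    simp [hb] at this
  have ht : (f b) 1 ≠ 0 := by
    intro h
    apply hbne
    funext i; fin_cases i <;> simp_all
  set c : ℂ := (f a) 1 / (f b) 1 with hc
  have hfa : f a = c • f b := by
    funext i
    fin_cases i
    · simp [ha0, hb0]
    · show f a 1 = c • (f b 1)
      rw [hc, smul_eq_mul, div_mul_cancel₀ _ ht]
    · simp [ha2, hb2]
  have hab : a = c • b := by
    apply f.injective
    rw [map_smul, hfa]
  have := congrFun hab 1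
  simp [ha, hb] at this
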